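/- In the network setup, suppose the family (φ_h)_{h∈H} is a traveling wave of the network problem at profile level, i.e. each φ_h is a profile and the coupling condition (Tool) holds. Then for every j ∈ J: max{f_j(ℓ_j⁻), f_j(ℓ_j⁺)} = Σ_{i∈I} α_{i,j} max{f_i(ℓ_i⁻), f_i(ℓ_i⁺)} and min{f_j(ℓ_j⁻), f_j(ℓ_j⁺)} = Σ_{i∈I} α_{i,j} min{f_i(ℓ_i⁻), f_i(ℓ_i⁺)}. -/

import Mathlib

open Set Filter MeasureTheory
open scoped Topology Classical

/-- Assumption (f): `f ∈ C¹([0,1];ℝ)` is nonnegative, strictly concave, `f 0 = f 1 = 0`. -/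
def FluxAssumption (f : ℝ → ℝ) : Prop :=
  ContDiffOn ℝ 1 f (Icc 0 1) ∧ StrictConcaveOn ℝ (Icc 0 1) f ∧
  (∀ x ∈ Icc (0:ℝ) 1, 0 ≤ f x) ∧ f 0 = 0 ∧ f 1 = 0

/-- Assumption (D): `D ∈ C¹([0,1];ℝ)` is nonnegative and positive on `(0,1)`. -/
def DiffAssumption (D : ℝ → ℝ) : Prop :=
  ContDiffOn ℝ 1 D (Icc 0 1) ∧ (∀ x ∈ Icc (0:ℝ) 1, 0 ≤ D x) ∧
  (∀ x ∈ Ioo (0:ℝ) 1, 0 < D x)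

/-- The wave speed `c = (f(ℓ⁺) - f(ℓ⁻))/(ℓ⁺ - ℓ⁻)`. -/
noncomputable def waveSpeed (f : ℝ → ℝ) (a b : ℝ) : ℝ := (f b - f a) / (b - a)

/-- The reduced flux `g(ρ) = f(ρ) - c ρ`. -/
noncomputable def redFlux (f : ℝ → ℝ) (a b ρ : ℝ) : ℝ := f ρ - waveSpeed f a b * ρ

/-- A profile for data `f, D, ℓ⁻ = a, ℓ⁺ = b`: continuous, non-decreasing, with values in
`[a,b]`, limits `a` at `-∞` and `b` at `+∞`, `C²` on `I = {ξ | a < φ ξ < b}` with positive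
derivative there, satisfying `D(φ) φ' = g(φ) - g(a)` on `I`. -/
def IsProfile (f D : ℝ → ℝ) (a b : ℝ) (φ : ℝ → ℝ) : Prop :=
  Continuous φ ∧ Monotone φ ∧ (∀ ξ, φ ξ ∈ Icc a b) ∧
  Tendsto φ atBot (𝓝 a) ∧ Tendsto φ atTop (𝓝 b) ∧
  ContDiffOn ℝ 2 φ {ξ | a < φ ξ ∧ φ ξ < b} ∧
  ∀ ξ, a < φ ξ → φ ξ < b →
    0 < deriv φ ξ ∧ D (φ ξ) * deriv φ ξ = redFlux f a b (φ ξ) - redFlux f a b a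

/-- Speed of road `h` given end–state functions. -/
noncomputable def spd {H : Type*} (f : H → ℝ → ℝ) (lm lp : H → ℝ) (h : H) : ℝ :=
  waveSpeed (f h) (lm h) (lp h)

/-- Reduced flux of road `h` given end–state functions. -/
noncomputable def gred {H : Type*} (f : H → ℝ → ℝ) (lm lp : H → ℝ) (h : H) (ρ : ℝ) : ℝ :=
  redFlux (f h) (lm h) (lp h) ρ

/-- The network setup: flux/diffusivity assumptions on each road, and coefficients
`α i j ∈ (0,1]` with unit row sums. -/
def NetworkSetup {m n : ℕ} (f D : Fin m ⊕ Fin n → ℝ → ℝ) (α : Fin m → Fin n → ℝ) : Prop :=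
  (∀ h, FluxAssumption (f h)) ∧ (∀ h, DiffAssumption (D h)) ∧
  (∀ i j, α i j ∈ Ioc (0:ℝ) 1) ∧ (∀ i, ∑ j, α i j = 1)

/-- Admissible end states: `0 ≤ ℓ_h⁻ < ℓ_h⁺ ≤ 1` for every road. -/
def EndStates {H : Type*} (lm lp : H → ℝ) : Prop :=
  ∀ h, 0 ≤ lm h ∧ lm h < lp h ∧ lp h ≤ 1

/-- The coupling condition (Tool):
`c_j φ_j(c_j t) + g_j(ℓ_j⁻) = ∑_i α_{i,j} (c_i φ_i(c_i t) + g_i(ℓ_i⁻))` for all `t, j`. -/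
def Tool {m n : ℕ} (f : Fin m ⊕ Fin n → ℝ → ℝ) (α : Fin m → Fin n → ℝ)
    (lm lp : Fin m ⊕ Fin n → ℝ) (φ : Fin m ⊕ Fin n → ℝ → ℝ) : Prop :=
  ∀ t : ℝ, ∀ j : Fin n,
    spd f lm lp (Sum.inr j) * φ (Sum.inr j) (spd f lm lp (Sum.inr j) * t)
      + gred f lm lp (Sum.inr j) (lm (Sum.inr j))
    = ∑ i : Fin m, α i j *
        (spd f lm lp (Sum.inl i) * φ (Sum.inl i) (spd f lm lp (Sum.inl i) * t)
          + gred f lm lp (Sum.inl i) (lm (Sum.inl i)))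

/-- A traveling wave of the network problem at profile level: a family of profiles
satisfying the coupling condition (Tool). -/
def IsTravelingWave {m n : ℕ} (f D : Fin m ⊕ Fin n → ℝ → ℝ) (α : Fin m → Fin n → ℝ)
    (lm lp : Fin m ⊕ Fin n → ℝ) (φ : Fin m ⊕ Fin n → ℝ → ℝ) : Prop :=
  (∀ h, IsProfile (f h) (D h) (lm h) (lp h) (φ h)) ∧ Tool f α lm lp φ

/-- `L_{i,j}⁻`: `ℓ_i⁻` if `c_i c_j ≥ 0`, and `ℓ_i⁺` otherwise. -/
noncomputable def Lminus {m n : ℕ} (f : Fin m ⊕ Fin n → ℝ → ℝ)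
    (lm lp : Fin m ⊕ Fin n → ℝ) (i : Fin m) (j : Fin n) : ℝ :=
  if 0 ≤ spd f lm lp (Sum.inl i) * spd f lm lp (Sum.inr j) then lm (Sum.inl i)
  else lp (Sum.inl i)

/-- `L_{i,j}⁺`: `ℓ_i⁺` if `c_i c_j ≥ 0`, and `ℓ_i⁻` otherwise. -/
noncomputable def Lplus {m n : ℕ} (f : Fin m ⊕ Fin n → ℝ → ℝ)
    (lm lp : Fin m ⊕ Fin n → ℝ) (i : Fin m) (j : Fin n) : ℝ :=
  if 0 ≤ spd f lm lp (Sum.inl i) * spd f lm lp (Sum.inr j) then lp (Sum.inl i)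
  else lm (Sum.inl i)

/-- `k_j = ∑_{i ∈ I₀ᶜ} A_{i,j} L_{i,j}⁻ - ℓ_j⁻` with `A_{i,j} = α_{i,j} c_i / c_j`. -/
noncomputable def kconst {m n : ℕ} (f : Fin m ⊕ Fin n → ℝ → ℝ) (α : Fin m → Fin n → ℝ)
    (lm lp : Fin m ⊕ Fin n → ℝ) (j : Fin n) : ℝ :=
  (∑ i ∈ Finset.univ.filter (fun i : Fin m => spd f lm lp (Sum.inl i) ≠ 0),
      (α i j * (spd f lm lp (Sum.inl i) / spd f lm lp (Sum.inr j))) * Lminus f lm lp i j)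
    - lm (Sum.inr j)

/-
The coupling condition equates, for all `t`, the function `c_j φ_j(c_j t) + g_j(ℓ_j⁻)` with the
`α_{·,j}`-weighted sum of the corresponding functions of the incoming roads, so the limits as
`t → ±∞` must agree as well. For a single road, `ρ ↦ c ρ + g(ℓ⁻)` is the chord of `f` through
`(ℓ⁻, f ℓ⁻)` and `(ℓ⁺, f ℓ⁺)`, and as `t → +∞` the profile `φ(c t)` tends to the end state where
this chord is larger (`ℓ⁺` if `c > 0`, `ℓ⁻` if `c < 0`), so the limit is `max (f ℓ⁻) (f ℓ⁺)`;
symmetrically the limit as `t → -∞` is the minimum.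
-/

theorem redFlux_right_eq_left (f : ℝ → ℝ) (a b : ℝ) : redFlux f a b b = redFlux f a b a := by
  rcases eq_or_ne a b with rfl | hab
  · rfl
  · unfold redFlux waveSpeed
    field_simp [sub_ne_zero.mpr hab.symm]
    ring

theorem waveSpeed_mul_add_redFlux (f : ℝ → ℝ) (a b x : ℝ) :
    waveSpeed f a b * x + redFlux f a b x = f x := by
  unfold redFlux
  ring

theorem tendsto_mul_comp_mul_atTop {φ : ℝ → ℝ} {a b : ℝ} (hab : a ≤ b)
    (hbot : Tendsto φ atBot (𝓝 a)) (htop : Tendsto φ atTop (𝓝 b)) (c : ℝ) :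
    Tendsto (fun t => c * φ (c * t)) atTop (𝓝 (max (c * a) (c * b))) := by
  rcases lt_trichotomy c 0 with hc | rfl | hc
  · rw [max_eq_left (mul_le_mul_of_nonpos_left hab hc.le)]
    exact (hbot.comp (tendsto_id.const_mul_atTop_of_neg hc)).const_mul c
  · simp
  · rw [max_eq_right (mul_le_mul_of_nonneg_left hab hc.le)]
    exact (htop.comp (tendsto_id.const_mul_atTop hc)).const_mul c

theorem tendsto_mul_comp_mul_atBot {φ : ℝ → ℝ} {a b : ℝ} (hab : a ≤ b)
    (hbot : Tendsto φ atBot (𝓝 a)) (htop : Tendsto φ atTop (𝓝 b)) (c : ℝ) :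
    Tendsto (fun t => c * φ (c * t)) atBot (𝓝 (min (c * a) (c * b))) := by
  rcases lt_trichotomy c 0 with hc | rfl | hc
  · rw [min_eq_right (mul_le_mul_of_nonpos_left hab hc.le)]
    exact (htop.comp (tendsto_id.const_mul_atBot_of_neg hc)).const_mul c
  · simp
  · rw [min_eq_left (mul_le_mul_of_nonneg_left hab hc.le)]
    exact (hbot.comp (tendsto_id.const_mul_atBot hc)).const_mul c

namespace IsProfile

variable {f D φ : ℝ → ℝ} {a b : ℝ}

theorem left_le_right (hφ : IsProfile f D a b φ) : a ≤ b :=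
  (hφ.2.2.1 0).1.trans (hφ.2.2.1 0).2

theorem tendsto_atTop (hφ : IsProfile f D a b φ) :
    Tendsto (fun t => waveSpeed f a b * φ (waveSpeed f a b * t) + redFlux f a b a) atTop
      (𝓝 (max (f a) (f b))) := by
  have hmax : max (f a) (f b) =
      max (waveSpeed f a b * a) (waveSpeed f a b * b) + redFlux f a b a := by
    rw [← max_add_add_right]
    conv_lhs => rw [← waveSpeed_mul_add_redFlux f a b a, ← waveSpeed_mul_add_redFlux f a b b,
      redFlux_right_eq_left]
  rw [hmax]
  exact (tendsto_mul_comp_mul_atTop hφ.left_le_right hφ.2.2.2.1 hφ.2.2.2.2.1 _).add_const _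

theorem tendsto_atBot (hφ : IsProfile f D a b φ) :
    Tendsto (fun t => waveSpeed f a b * φ (waveSpeed f a b * t) + redFlux f a b a) atBot
      (𝓝 (min (f a) (f b))) := by
  have hmin : min (f a) (f b) =
      min (waveSpeed f a b * a) (waveSpeed f a b * b) + redFlux f a b a := by
    rw [← min_add_add_right]
    conv_lhs => rw [← waveSpeed_mul_add_redFlux f a b a, ← waveSpeed_mul_add_redFlux f a b b,
      redFlux_right_eq_left]
  rw [hmin]
  exact (tendsto_mul_comp_mul_atBot hφ.left_le_right hφ.2.2.2.1 hφ.2.2.2.2.1 _).add_const _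

end IsProfile

theorem stmt7_general (m n : ℕ)
    (f D : Fin m ⊕ Fin n → ℝ → ℝ) (α : Fin m → Fin n → ℝ)
    (lm lp : Fin m ⊕ Fin n → ℝ)
    (φ : Fin m ⊕ Fin n → ℝ → ℝ)
    (hTW : IsTravelingWave f D α lm lp φ) :
    ∀ j : Fin n,
      max (f (Sum.inr j) (lm (Sum.inr j))) (f (Sum.inr j) (lp (Sum.inr j)))
        = ∑ i : Fin m, α i j *
            max (f (Sum.inl i) (lm (Sum.inl i))) (f (Sum.inl i) (lp (Sum.inl i))) ∧
      min (f (Sum.inr j) (lm (Sum.inr j))) (f (Sum.inr j) (lp (Sum.inr j)))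
        = ∑ i : Fin m, α i j *
            min (f (Sum.inl i) (lm (Sum.inl i))) (f (Sum.inl i) (lp (Sum.inl i))) := by
  intro j
  obtain ⟨hprof, htool⟩ := hTW
  exact ⟨tendsto_nhds_unique (hprof (.inr j)).tendsto_atTop
      ((tendsto_finsetSum _ fun i _ => (hprof (.inl i)).tendsto_atTop.const_mul (α i j)).congr
        fun t => (htool t j).symm),
    tendsto_nhds_unique (hprof (.inr j)).tendsto_atBot
      ((tendsto_finsetSum _ fun i _ => (hprof (.inl i)).tendsto_atBot.const_mul (α i j)).congr
        fun t => (htool t j).symm)⟩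

/-- For a traveling wave of the network problem, the max/min flux balances hold at the node. -/
theorem stmt7 (m n : ℕ) (hm : 0 < m) (hn : 0 < n)
    (f D : Fin m ⊕ Fin n → ℝ → ℝ) (α : Fin m → Fin n → ℝ)
    (hnet : NetworkSetup f D α)
    (lm lp : Fin m ⊕ Fin n → ℝ) (hends : EndStates lm lp)
    (φ : Fin m ⊕ Fin n → ℝ → ℝ)
    (hTW : IsTravelingWave f D α lm lp φ) :
    ∀ j : Fin n,
      max (f (Sum.inr j) (lm (Sum.inr j))) (f (Sum.inr j) (lp (Sum.inr j)))
        = ∑ i : Fin m, α i j *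
            max (f (Sum.inl i) (lm (Sum.inl i))) (f (Sum.inl i) (lp (Sum.inl i))) ∧
      min (f (Sum.inr j) (lm (Sum.inr j))) (f (Sum.inr j) (lp (Sum.inr j)))
        = ∑ i : Fin m, α i j *
            min (f (Sum.inl i) (lm (Sum.inl i))) (f (Sum.inl i) (lp (Sum.inl i))) :=
  stmt7_general m n f D α lm lp φ hTW
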